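/- arXiv:math/0611353 — 8 statements merged into one kernel-verified Lean document; each statement's English description precedes it below -/
import Mathlib

section
/- Let G be a topological group and k a natural number. Then the direct power G^k (with the product topology) is Menger-bounded if and only if for every sequence (U_n) of neighborhoods of the identity of G there exist finite sets F_n ⊆ G such that for every subset F ⊆ G with |F| = k there is some n with F ⊆ F_n · U_n. Here G is Menger-bounded means: for every sequence (U_n) of neighborhoods of the identity there exist finite sets F_n ⊆ G with G = ⋃_n F_n · U_n. -/
open Pointwise Filter Topology

/-- A topological group `G` is Menger-bounded if for each sequence of neighborhoods
of the unit there exist finite sets `F n ⊆ G` with `G = ⋃ n, F n * U n`. -/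
def MengerBounded (G : Type*) [Group G] [TopologicalSpace G] : Prop :=
  ∀ U : ℕ → Set G, (∀ n, U n ∈ 𝓝 (1 : G)) →
    ∃ F : ℕ → Finset G, ∀ g : G, ∃ n, g ∈ (F n : Set G) * U n

theorem stmt0 (G : Type*) [Group G] [TopologicalSpace G] [IsTopologicalGroup G] (k : ℕ) :
    MengerBounded (Fin k → G) ↔
      ∀ U : ℕ → Set G, (∀ n, U n ∈ 𝓝 (1 : G)) →
        ∃ F : ℕ → Finset G, ∀ S : Finset G, S.card = k →
          ∃ n, (S : Set G) ⊆ (F n : Set G) * U n := by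
  classical
  constructor
  · -- forward
    intro hMB U hU
    set V : ℕ → Set (Fin k → G) := fun n => Set.pi Set.univ (fun _ => U n) with hV
    have hVnhds : ∀ n, V n ∈ 𝓝 (1 : Fin k → G) := fun n =>
      set_pi_mem_nhds Set.finite_univ (fun i _ => hU n)
    obtain ⟨F, hF⟩ := hMB V hVnhds
    refine ⟨fun n => (F n).biUnion (fun f => Finset.image f Finset.univ), ?_⟩
    intro S hS
    set e := (S.equivFinOfCardEq hS).symm with he
    set g : Fin k → G := fun i => (e i : G) with hg
    obtain ⟨n, hn⟩ := hF g
    obtain ⟨a, ha, v, hv, hav⟩ := hn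
    refine ⟨n, fun s hs => ?_⟩
    have : s = g (e.symm ⟨s, hs⟩) := by simp [hg]
    rw [this]
    have hgi : ∀ i, g i = a i * v i := fun i => (congrFun hav i).symm
    refine ⟨a (e.symm ⟨s, hs⟩), ?_, v (e.symm ⟨s, hs⟩), ?_, (hgi _).symm⟩
    · simp only [Finset.coe_biUnion, Set.mem_iUnion, Finset.coe_image]
      exact ⟨a, ha, Set.mem_image_of_mem _ (by simp)⟩
    · exact hv _ (Set.mem_univ _)
  · -- backward
    intro h V hV
    -- extract basic product neighborhoods
    have key : ∀ n, ∃ U : Set G, U ∈ 𝓝 (1 : G) ∧ Set.pi Set.univ (fun _ : Fin k => U) ⊆ V n := by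
      intro n
      have := hV n
      rw [nhds_pi, Filter.mem_pi] at this
      obtain ⟨I, _, t, ht, hsub⟩ := this
      refine ⟨⋂ i, t i, ?_, ?_⟩
      · exact (Filter.iInter_mem.2 fun i => ht i)
      · intro x hx
        apply hsub
        intro i _
        exact Set.mem_iInter.1 (hx i (Set.mem_univ i)) i
    choose U hU hUV using key
    by_cases hex : ∃ T : Finset G, T.card = k
    · obtain ⟨T, hT⟩ := hex
      obtain ⟨F, hF⟩ := h U hU
      refine ⟨fun n => Fintype.piFinset (fun _ : Fin k => F n), ?_⟩
      intro g
      set S0 : Finset G := Finset.image g Finset.univ with hS0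
      have hS0k : S0.card ≤ k := Finset.card_image_le.trans (by simp)
      obtain ⟨S, hS0S, -, hScard⟩ := Finset.exists_subsuperset_card_eq
        (Finset.subset_union_left (s₂ := T)) hS0k
        (le_trans hT.ge (Finset.card_le_card Finset.subset_union_right))
      obtain ⟨n, hn⟩ := hF S hScard
      have hmem : ∀ i, ∃ a ∈ F n, ∃ v ∈ U n, a * v = g i := by
        intro i
        have : g i ∈ (F n : Set G) * U n :=
          hn (hS0S (Finset.mem_image.2 ⟨i, Finset.mem_univ i, rfl⟩))
        exact this
      choose a ha v hv hav using hmem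
      refine ⟨n, a, ?_, v, ?_, funext hav⟩
      · exact Finset.mem_coe.2 (Fintype.mem_piFinset.2 ha)
      · exact hUV n (fun i _ => hv i)
    · -- G is finite with fewer than k elements
      have hfin : Finite G := by
        by_contra hinf
        rw [not_finite_iff_infinite] at hinf
        exact hex (Infinite.exists_subset_card_eq G k)
      have : Fintype G := Fintype.ofFinite G
      refine ⟨fun _ => Finset.univ, fun g => ⟨0, g, by simp, 1, mem_of_mem_nhds (hV 0), mul_one g⟩⟩
end

section
/- A topological group G is Scheepers-bounded if and only if G^k is Menger-bounded for every natural number k. -/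
open Pointwise Filter Topology

/-- A topological group `G` is Scheepers-bounded if for each sequence of neighborhoods
of the unit there exist finite sets `F n ⊆ G` such that every finite `S ⊆ G`
is contained in some `F n * U n`. -/
def ScheepersBounded (G : Type*) [Group G] [TopologicalSpace G] : Prop :=
  ∀ U : ℕ → Set G, (∀ n, U n ∈ 𝓝 (1 : G)) →
    ∃ F : ℕ → Finset G, ∀ S : Finset G, ∃ n, (S : Set G) ⊆ (F n : Set G) * U n

theorem stmt1 (G : Type*) [Group G] [TopologicalSpace G] [IsTopologicalGroup G] :
    ScheepersBounded G ↔ ∀ k : ℕ, MengerBounded (Fin k → G) := by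
  classical
  constructor
  · intro hS k U hU
    have hV : ∀ n, ∃ V : Set G, V ∈ 𝓝 (1 : G) ∧
        {g : Fin k → G | ∀ i, g i ∈ V} ⊆ U n := by
      intro n
      have h := hU n
      rw [nhds_pi, Filter.mem_pi] at h
      obtain ⟨I, hI, s, hs, hsub⟩ := h
      refine ⟨⋂ i, s i, Filter.iInter_mem.2 hs, ?_⟩
      intro g hg
      exact hsub fun i _ => Set.mem_iInter.1 (hg i) i
    choose V hV1 hV2 using hV
    obtain ⟨F, hF⟩ := hS V hV1
    refine ⟨fun n => Fintype.piFinset fun _ => F n, ?_⟩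
    intro g
    obtain ⟨n, hn⟩ := hF (Finset.image g Finset.univ)
    have hx : ∀ i, ∃ f ∈ F n, ∃ v ∈ V n, f * v = g i := by
      intro i
      have hgi : g i ∈ (F n : Set G) * V n :=
        hn (Finset.mem_coe.2 (Finset.mem_image.2 ⟨i, Finset.mem_univ i, rfl⟩))
      simpa [Set.mem_mul] using hgi
    choose f hf v hv hfv using hx
    refine ⟨n, Set.mem_mul.2 ⟨f, ?_, v, ?_, ?_⟩⟩
    · exact Finset.mem_coe.2 (Fintype.mem_piFinset.2 hf)
    · exact hV2 n hv
    · funext i; exact hfv i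
  · intro hM U hU
    have key : ∀ k : ℕ, ∃ H : ℕ → Finset (Fin k → G), ∀ x : Fin k → G, ∃ m,
        x ∈ (H m : Set (Fin k → G)) * {g : Fin k → G | ∀ i, g i ∈ U (Nat.pair k m)} := by
      intro k
      apply hM k
      intro m
      rw [nhds_pi]
      have heq : {g : Fin k → G | ∀ i, g i ∈ U (Nat.pair k m)} =
          Set.pi Set.univ (fun _ => U (Nat.pair k m)) := by
        ext g; simp [Set.mem_pi]
      rw [heq]
      exact Filter.mem_pi.2 ⟨Set.univ, Set.finite_univ, _, fun _ => hU _, subset_rfl⟩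
    choose H hH using key
    obtain ⟨F', hF'⟩ : ∃ F' : ℕ → ℕ → Finset G,
        ∀ k m (f : Fin k → G), f ∈ H k m → ∀ i, f i ∈ F' k m :=
      ⟨fun k m => (H k m).biUnion (fun f => Finset.image f Finset.univ),
        fun k m f hf i => Finset.mem_biUnion.2
          ⟨f, hf, Finset.mem_image_of_mem _ (Finset.mem_univ i)⟩⟩
    refine ⟨fun n => F' n.unpair.1 n.unpair.2, ?_⟩
    intro S
    set k := S.card with hk
    let e : Fin k ≃ S := S.equivFin.symm
    obtain ⟨m, hm⟩ := hH k (fun i => (e i : G))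
    refine ⟨Nat.pair k m, ?_⟩
    beta_reduce
    simp only [Nat.unpair_pair]
    rw [Set.mem_mul] at hm
    obtain ⟨h, hh, u, hu, huv⟩ := hm
    intro s hs
    have hs' : s ∈ S := hs
    have hxi : h (e.symm ⟨s, hs'⟩) * u (e.symm ⟨s, hs'⟩) = s := by
      have := congrFun huv (e.symm ⟨s, hs'⟩)
      simpa using this
    exact Set.mem_mul.2 ⟨h (e.symm ⟨s, hs'⟩),
      Finset.mem_coe.2 (hF' k m h hh _), u (e.symm ⟨s, hs'⟩), hu _, hxi⟩
end

section
/- Let G be a subgroup of ℤ^ℕ and k ≥ 1. The following are equivalent: (2) for each increasing h : ℕ → ℕ there is f : ℕ → ℕ such that for each k-element subset F of G there exists n with |g(i)| ≤ f(n) for all g ∈ F and i < h(n); (3) for each increasing h : ℕ → ℕ there is f : ℕ → ℕ such that for each k-element subset F of G there exist infinitely many n with |g(i)| ≤ f(n) for all g ∈ F and i < h(n); (4) there is f : ℕ → ℕ such that for each k-element subset F of G there exist infinitely many n with |g(i)| ≤ f(n) for all g ∈ F and i < n. -/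
theorem stmt5 (G : AddSubgroup (ℕ → ℤ)) (k : ℕ) (hk : 1 ≤ k) :
    -- (2): for each increasing h there is f such that each k-element subset of G
    -- satisfies the bound at some n
    ((∀ h : ℕ → ℕ, StrictMono h → ∃ f : ℕ → ℕ,
        ∀ F : Finset (ℕ → ℤ), ↑F ⊆ (G : Set (ℕ → ℤ)) → F.card = k →
          ∃ n, ∀ g ∈ F, ∀ i < h n, (g i).natAbs ≤ f n) ↔
      -- (3): ... at infinitely many n
      (∀ h : ℕ → ℕ, StrictMono h → ∃ f : ℕ → ℕ,
        ∀ F : Finset (ℕ → ℤ), ↑F ⊆ (G : Set (ℕ → ℤ)) → F.card = k →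
          {n : ℕ | ∀ g ∈ F, ∀ i < h n, (g i).natAbs ≤ f n}.Infinite)) ∧
    -- (3) ↔ (4)
    ((∀ h : ℕ → ℕ, StrictMono h → ∃ f : ℕ → ℕ,
        ∀ F : Finset (ℕ → ℤ), ↑F ⊆ (G : Set (ℕ → ℤ)) → F.card = k →
          {n : ℕ | ∀ g ∈ F, ∀ i < h n, (g i).natAbs ≤ f n}.Infinite) ↔
      (∃ f : ℕ → ℕ,
        ∀ F : Finset (ℕ → ℤ), ↑F ⊆ (G : Set (ℕ → ℤ)) → F.card = k →
          {n : ℕ | ∀ g ∈ F, ∀ i < n, (g i).natAbs ≤ f n}.Infinite)) := by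
  constructor
  · constructor
    · -- (2) → (3)
      intro H2 h hh
      choose f hf using fun N : ℕ => H2 (fun n => h (n + N))
        (fun a b hab => hh (by omega))
      refine ⟨fun m => Finset.sup (Finset.Iic m) (fun N => f N (m - N)),
        fun F hF hcard => Set.infinite_of_forall_exists_gt fun N => ?_⟩
      obtain ⟨n, hn⟩ := hf (N + 1) F hF hcard
      refine ⟨n + (N + 1), fun g hg i hi => ?_, by omega⟩
      calc (g i).natAbs ≤ f (N + 1) n := hn g hg i hi
        _ = f (N + 1) (n + (N + 1) - (N + 1)) := by rw [Nat.add_sub_cancel]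
        _ ≤ _ := Finset.le_sup (f := fun N' => f N' (n + (N + 1) - N'))
            (b := N + 1) (Finset.mem_Iic.mpr (by omega))
    · -- (3) → (2)
      intro H3 h hh
      obtain ⟨f, hf⟩ := H3 h hh
      exact ⟨f, fun F hF hcard => (hf F hF hcard).nonempty⟩
  · constructor
    · -- (3) → (4)
      intro H3
      obtain ⟨f, hf⟩ := H3 id strictMono_id
      exact ⟨f, hf⟩
    · -- (4) → (3)
      intro H4 h hh
      obtain ⟨f, hf⟩ := H4
      refine ⟨fun n => Finset.sup (Finset.Iic (h (n + 1))) f,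
        fun F hF hcard => Set.infinite_of_forall_exists_gt fun N => ?_⟩
      obtain ⟨m, hm, hmgt⟩ := (hf F hF hcard).exists_gt (h (N + 1))
      set n := Nat.findGreatest (fun n => h n ≤ m) m with hn
      have h0 : h 0 ≤ m := le_trans (hh.monotone (Nat.zero_le _)) hmgt.le
      have hnm : h n ≤ m := @Nat.findGreatest_spec 0 (fun j => h j ≤ m) (fun _ => inferInstance) m (Nat.zero_le m) h0
      have hsucc : m < h (n + 1) := by
        by_cases hc : n + 1 ≤ m
        · exact lt_of_not_ge (Nat.findGreatest_is_greatest (P := fun j => h j ≤ m) (by rw [← hn]; omega) hc)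
        · have : m < n + 1 := by omega
          exact lt_of_lt_of_le this (hh.le_apply)
      refine ⟨n, fun g hg i hi => ?_, ?_⟩
      · calc (g i).natAbs ≤ f m := hm g hg i (lt_of_lt_of_le hi hnm)
          _ ≤ _ := Finset.le_sup (by simp [hsucc.le])
      · -- N < n : since h (N+1) < m < h (n+1)
        have : h (N + 1) < h (n + 1) := lt_trans hmgt hsucc
        have := hh.lt_iff_lt.mp this
        omega
end

section
/- Let G be a subgroup of the Baer–Specker group ℤ^ℕ with the product topology, and k ≥ 1. Then G^k is Menger-bounded if and only if for each increasing h : ℕ → ℕ there exists f : ℕ → ℕ such that for every k-element subset F of G there is some n with |g(i)| ≤ f(n) for all g ∈ F and all i < h(n). -/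
open Pointwise Filter Topology

/-- An additive topological group is Menger-bounded if for each sequence of
neighborhoods of `0` there exist finite sets `F n` with `G = ⋃ n, F n + U n`. -/
def MengerBoundedAdd (G : Type*) [AddGroup G] [TopologicalSpace G] : Prop :=
  ∀ U : ℕ → Set G, (∀ n, U n ∈ 𝓝 (0 : G)) →
    ∃ F : ℕ → Finset G, ∀ g : G, ∃ n, g ∈ (F n : Set G) + U n

private lemma basic_mem_nhds (G : AddSubgroup (ℕ → ℤ)) (k m : ℕ) :
    {x : Fin k → G | ∀ j, ∀ i < m, (x j : ℕ → ℤ) i = 0} ∈ 𝓝 (0 : Fin k → G) := by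
  have hopen : IsOpen {x : Fin k → G | ∀ j, ∀ i < m, (x j : ℕ → ℤ) i = 0} := by
    have heq : {x : Fin k → G | ∀ j, ∀ i < m, (x j : ℕ → ℤ) i = 0}
        = ⋂ p : Fin k × Fin m, (fun x : Fin k → G => (x p.1 : ℕ → ℤ) p.2) ⁻¹' {0} := by
      ext x
      simp only [Set.mem_setOf_eq, Set.mem_iInter, Set.mem_preimage, Set.mem_singleton_iff]
      exact ⟨fun h p => h p.1 p.2 p.2.isLt, fun h j i hi => h (j, ⟨i, hi⟩)⟩
    rw [heq]
    refine isOpen_iInter_of_finite fun p => ?_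
    have hc : Continuous (fun x : Fin k → G => (x p.1 : ℕ → ℤ) p.2) :=
      (continuous_apply (p.2 : ℕ)).comp (continuous_subtype_val.comp (continuous_apply p.1))
    exact (isOpen_discrete _).preimage hc
  refine hopen.mem_nhds ?_
  intro j i _
  simp

private lemma exists_basic (G : AddSubgroup (ℕ → ℤ)) (k : ℕ) (U : Set (Fin k → G)) (hU : U ∈ 𝓝 0) :
    ∃ m, ∀ x : Fin k → G, (∀ j, ∀ i < m, (x j : ℕ → ℤ) i = 0) → x ∈ U := by
  rw [nhds_pi, Filter.mem_pi] at hU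
  obtain ⟨I, hIfin, t, ht, hsub⟩ := hU
  have h2 : ∀ j : Fin k, ∃ mj : ℕ, ∀ g : G, (∀ i < mj, (g : ℕ → ℤ) i = 0) → g ∈ t j := by
    intro j
    have h3 := ht j
    rw [nhds_induced ((↑) : G → (ℕ → ℤ)), Filter.mem_comap] at h3
    obtain ⟨V, hV, hVsub⟩ := h3
    rw [show ((0 : Fin k → G) j : ℕ → ℤ) = (0 : ℕ → ℤ) by simp, nhds_pi, Filter.mem_pi] at hV
    obtain ⟨I', hI'fin, s, hs, hssub⟩ := hV
    obtain ⟨b, hb⟩ := hI'fin.bddAbove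
    refine ⟨b + 1, fun g hg => hVsub ?_⟩
    refine hssub fun i hi => ?_
    have h0 : (g : ℕ → ℤ) i = 0 := hg i (Nat.lt_succ_of_le (hb hi))
    rw [h0]
    exact mem_of_mem_nhds (hs i)
  choose m hm using h2
  refine ⟨Finset.univ.sup m, fun x hx => hsub fun j _ => ?_⟩
  exact hm j (x j) fun i hi => hx j i (lt_of_lt_of_le hi (Finset.le_sup (Finset.mem_univ j)))


theorem stmt6 (G : AddSubgroup (ℕ → ℤ)) (k : ℕ) (hk : 1 ≤ k) :
    MengerBoundedAdd (Fin k → G) ↔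
      ∀ h : ℕ → ℕ, StrictMono h → ∃ f : ℕ → ℕ,
        ∀ F : Finset (ℕ → ℤ), ↑F ⊆ (G : Set (ℕ → ℤ)) → F.card = k →
          ∃ n, ∀ g ∈ F, ∀ i < h n, (g i).natAbs ≤ f n := by
  constructor
  · intro hMB

    intro h hmono
    obtain ⟨F, hF⟩ := hMB (fun n => {x : Fin k → G | ∀ j, ∀ i < h n, (x j : ℕ → ℤ) i = 0})
      (fun n => basic_mem_nhds G k (h n))
    refine ⟨fun n => (F n).sup (fun c => Finset.univ.sup (fun j : Fin k =>
      (Finset.range (h n)).sup (fun i => ((c j : ℕ → ℤ) i).natAbs))), ?_⟩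
    intro S hS hcard
    set e := (S.equivFinOfCardEq hcard).symm
    set x : Fin k → G := fun j => ⟨(e j : ℕ → ℤ), hS (e j).2⟩ with hx
    obtain ⟨n, hn⟩ := hF x
    obtain ⟨c, hc, u, hu, hcu⟩ := hn
    refine ⟨n, fun g hg i hi => ?_⟩
    set j := e.symm ⟨g, hg⟩
    have hgx : (x j : ℕ → ℤ) = g := by
      simp [hx, j]
    have hxc : (x j : ℕ → ℤ) i = (c j : ℕ → ℤ) i := by
      have hu0 : (u j : ℕ → ℤ) i = 0 := hu j i hi
      have : (x j : ℕ → ℤ) i = (c j : ℕ → ℤ) i + (u j : ℕ → ℤ) i := by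
        rw [← hcu]; simp
      rw [this, hu0, add_zero]
    calc (g i).natAbs = ((c j : ℕ → ℤ) i).natAbs := by rw [← hgx, hxc]
      _ ≤ _ := by
          have h1 : ((c j : ℕ → ℤ) i).natAbs
              ≤ (Finset.range (h n)).sup (fun i => ((c j : ℕ → ℤ) i).natAbs) :=
            Finset.le_sup (f := fun i => ((c j : ℕ → ℤ) i).natAbs) (Finset.mem_range.mpr hi)
          have h2 : (Finset.range (h n)).sup (fun i => ((c j : ℕ → ℤ) i).natAbs)
              ≤ Finset.univ.sup (fun j : Fin k =>
                (Finset.range (h n)).sup (fun i => ((c j : ℕ → ℤ) i).natAbs)) :=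
            Finset.le_sup (f := fun j : Fin k =>
              (Finset.range (h n)).sup (fun i => ((c j : ℕ → ℤ) i).natAbs)) (Finset.mem_univ j)
          have h3 : Finset.univ.sup (fun j : Fin k =>
                (Finset.range (h n)).sup (fun i => ((c j : ℕ → ℤ) i).natAbs))
              ≤ (F n).sup (fun c => Finset.univ.sup (fun j : Fin k =>
                (Finset.range (h n)).sup (fun i => ((c j : ℕ → ℤ) i).natAbs))) :=
            Finset.le_sup (f := fun c : Fin k → G => Finset.univ.sup (fun j : Fin k =>
              (Finset.range (h n)).sup (fun i => ((c j : ℕ → ℤ) i).natAbs))) (Finset.mem_coe.mp hc)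
          exact le_trans h1 (le_trans h2 h3)
  · intro H
    intro U hU

  
    cases finite_or_infinite G with
    | inl hfin =>
      haveI : Finite (Fin k → G) := inferInstance
      haveI := Fintype.ofFinite (Fin k → G)
      refine ⟨fun _ => Finset.univ, fun g => ⟨0, ?_⟩⟩
      exact ⟨g, by simp, 0, mem_of_mem_nhds (hU 0), add_zero g⟩
    | inr hinf =>
      classical
      choose m hm using fun n => exists_basic G k (U n) (hU n)
      set h : ℕ → ℕ := fun n => (Finset.range (n + 1)).sup m + n with hh
      have hmono : StrictMono h := by
        intro a b hab
        have h1 : (Finset.range (a + 1)).sup m ≤ (Finset.range (b + 1)).sup m :=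
          Finset.sup_mono (by intro i hi; simp_all; omega)
        simp only [hh]; omega
      have hmh : ∀ n, m n ≤ h n := fun n =>
        le_trans (Finset.le_sup (Finset.mem_range.mpr (Nat.lt_succ_self n))) (Nat.le_add_right _ _)
      obtain ⟨f, hf⟩ := H h hmono
      -- patterns
      set π : ∀ n, (Fin k → G) → (Fin k → Fin (h n) → ℤ) :=
        fun n x j i => (x j : ℕ → ℤ) i with hπ
      set S : ∀ n, Set (Fin k → Fin (h n) → ℤ) :=
        fun n => {t | t ∈ Set.range (π n) ∧ ∀ j i, (t j i).natAbs ≤ f n} with hSdef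
      have hSfin : ∀ n, (S n).Finite := by
        intro n
        have hbox : (Set.pi (Set.univ : Set (Fin k)) (fun _ => Set.pi Set.univ
            (fun _ : Fin (h n) => Set.Icc (-(f n : ℤ)) (f n)))).Finite :=
          Set.Finite.pi fun _ => Set.Finite.pi fun _ => Set.finite_Icc _ _
        refine hbox.subset fun t ht => ?_
        intro j _; intro i _
        have h2 : |t j i| ≤ (f n : ℤ) := by
          rw [Int.abs_eq_natAbs]; exact_mod_cast ht.2 j i
        exact abs_le.mp h2
      have hsec : ∀ n (t : Fin k → Fin (h n) → ℤ), ∃ x : Fin k → G, t ∈ S n → π n x = t := by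
        intro n t
        by_cases ht : t ∈ S n
        · obtain ⟨x, hx⟩ := ht.1
          exact ⟨x, fun _ => hx⟩
        · exact ⟨0, fun h' => absurd h' ht⟩
      choose sec hsec' using hsec
      refine ⟨fun n => (hSfin n).toFinset.image (sec n), fun g => ?_⟩
      -- build a k-element superset of the coordinates of g
      set B : Finset G := Finset.univ.image g with hB
      have hBcard : B.card ≤ k := by simpa [hB] using Finset.card_image_le (f := g) (s := (Finset.univ : Finset (Fin k)))
      obtain ⟨T, hBT, hTcard⟩ := Infinite.exists_superset_card_eq B k hBcard
      set F' : Finset (ℕ → ℤ) := T.image (Subtype.val) with hF'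
      have hF'sub : ↑F' ⊆ (G : Set (ℕ → ℤ)) := by
        intro a ha
        simp only [hF', Finset.coe_image, Set.mem_image] at ha
        obtain ⟨b, _, rfl⟩ := ha
        exact b.2
      have hF'card : F'.card = k := by
        rw [hF', Finset.card_image_of_injective _ Subtype.val_injective, hTcard]
      obtain ⟨n, hn⟩ := hf F' hF'sub hF'card
      have hgS : π n g ∈ S n := by
        refine ⟨⟨g, rfl⟩, fun j i => ?_⟩
        have hmem : (g j : ℕ → ℤ) ∈ F' := by
          simp only [hF', Finset.mem_image]
          exact ⟨g j, hBT (Finset.mem_image.mpr ⟨j, Finset.mem_univ j, rfl⟩), rfl⟩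
        exact hn _ hmem i i.isLt
      set c := sec n (π n g) with hc
      have hπc : π n c = π n g := hsec' n (π n g) hgS
      refine ⟨n, c, ?_, g - c, ?_, by simp⟩
      · simp only [Finset.coe_image, Set.mem_image, Set.Finite.mem_toFinset, Finset.mem_coe]
        exact ⟨π n g, by simpa using hgS, rfl⟩
      · refine hm n (g - c) fun j i hi => ?_
        have hi' : i < h n := lt_of_lt_of_le hi (hmh n)
        have := congrFun (congrFun hπc j) (⟨i, hi'⟩ : Fin (h n))
        simp only [hπ] at this
        have hsub : ((g - c) j : ℕ → ℤ) i = (g j : ℕ → ℤ) i - (c j : ℕ → ℤ) i := by simp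
        rw [hsub, this, sub_self]
end

section
/- Fix a partition 𝒫 = {I_l : l ∈ ℕ} of ℕ such that for each l there are infinitely many n with n, n+1 ∈ I_l. For f : ℕ → ℕ and increasing h : ℕ → ℕ define [f ≪ h] = {n : f(h(n)) < h(n+1)}. Then: for every countable family Y of functions ℕ → ℕ there exists an increasing h : ℕ → ℕ such that for every f ∈ Y and every l, there are infinitely many n with both n and n+1 in I_l ∩ [f ≪ h]. -/
open Filter

theorem stmt8 (I : ℕ → Set ℕ)
    (hpart : ∀ n : ℕ, ∃! l, n ∈ I l)
    (hpairs : ∀ l, {n : ℕ | n ∈ I l ∧ n + 1 ∈ I l}.Infinite)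
    (Y : Set (ℕ → ℕ)) (hY : Y.Countable) :
    ∃ h : ℕ → ℕ, StrictMono h ∧ ∀ f ∈ Y, ∀ l,
      {n : ℕ | n ∈ I l ∧ n + 1 ∈ I l ∧
        f (h n) < h (n + 1) ∧ f (h (n + 1)) < h (n + 2)}.Infinite := by
  rcases Set.eq_empty_or_nonempty Y with hY0 | hne
  · exact ⟨id, strictMono_id, by simp [hY0]⟩
  obtain ⟨e, he⟩ := Set.Countable.exists_eq_range hY hne
  set g : ℕ → ℕ := fun x => (Finset.range (x + 1)).sup (fun k => e k x) with hg
  set h : ℕ → ℕ := fun n => Nat.rec 0 (fun _ prev => g prev + prev + 1) n with hh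
  have hsucc : ∀ n, h (n + 1) = g (h n) + h n + 1 := fun n => rfl
  have hmono : StrictMono h := by
    apply strictMono_nat_of_lt_succ
    intro n
    rw [hsucc]
    omega
  have hge : ∀ n, n ≤ h n := fun n => (hmono.le_apply)
  have key : ∀ k n, k ≤ n → e k (h n) < h (n + 1) := by
    intro k n hkn
    have hk : k ≤ h n := le_trans hkn (hge n)
    have : e k (h n) ≤ g (h n) :=
      Finset.le_sup (f := fun k => e k (h n)) (Finset.mem_range.mpr (by omega))
    rw [hsucc]; omega
  refine ⟨h, hmono, ?_⟩
  intro f hf l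
  rw [he] at hf
  obtain ⟨k, hk⟩ := hf
  have hsub : {n : ℕ | n ∈ I l ∧ n + 1 ∈ I l} \ Set.Iio k ⊆
      {n : ℕ | n ∈ I l ∧ n + 1 ∈ I l ∧ f (h n) < h (n + 1) ∧ f (h (n + 1)) < h (n + 2)} := by
    rintro n ⟨⟨h1, h2⟩, h3⟩
    have hkn : k ≤ n := not_lt.mp h3
    refine ⟨h1, h2, ?_, ?_⟩
    · rw [← hk]; exact key k n hkn
    · rw [← hk]; exact key k (n + 1) (by omega)
  exact Set.Infinite.mono hsub ((hpairs l).diff (Set.finite_Iio k))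
end

section
/- Fix a partition 𝒫 = {I_l : l ∈ ℕ} of ℕ such that each I_l contains infinitely many pairs {n, n+1} of consecutive integers. For each f : ℕ → ℕ, each l, and each m ∈ ℕ, the set Y_{f,l,m} of all increasing h : ℕ → ℕ such that for all n ≥ m with n, n+1 ∈ I_l one has f(h(n)) ≥ h(n+1) or f(h(n+1)) ≥ h(n+2), is nowhere dense in the space of increasing functions ℕ → ℕ (a subspace of the Baire space ℕ^ℕ). -/
/-- The set `Y_{f,l,m}` of increasing functions for which, from `m` on, consecutive
pairs `n, n+1 ∈ I l` fail the domination condition, is nowhere dense in the space of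
strictly increasing functions `ℕ → ℕ` (as a subspace of the Baire space). -/
theorem stmt9 (I : ℕ → Set ℕ)
    (hpart : ∀ n : ℕ, ∃! l, n ∈ I l)
    (hpairs : ∀ l, {n : ℕ | n ∈ I l ∧ n + 1 ∈ I l}.Infinite)
    (f : ℕ → ℕ) (l m : ℕ) :
    IsNowhereDense {h : {h : ℕ → ℕ // StrictMono h} |
      ∀ n, m ≤ n → n ∈ I l → n + 1 ∈ I l →
        h.1 (n + 1) ≤ f (h.1 n) ∨ h.1 (n + 2) ≤ f (h.1 (n + 1))} := by
  set Y : Set {h : ℕ → ℕ // StrictMono h} := {h : {h : ℕ → ℕ // StrictMono h} |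
      ∀ n, m ≤ n → n ∈ I l → n + 1 ∈ I l →
        h.1 (n + 1) ≤ f (h.1 n) ∨ h.1 (n + 2) ≤ f (h.1 (n + 1))} with hY
  rw [IsNowhereDense, Set.eq_empty_iff_forall_notMem]
  intro h hh
  -- interior (closure Y) is open in the subtype, hence induced from an open W
  obtain ⟨W, hWopen, hWeq⟩ := isOpen_induced_iff.mp (isOpen_interior :
    IsOpen (interior (closure Y)))
  have hhW : (h : ℕ → ℕ) ∈ W := by rw [← hWeq] at hh; exact hh
  obtain ⟨F, u, hu, hFu⟩ := isOpen_pi_iff.mp hWopen _ hhW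
  set N : ℕ := F.sup id + 1 with hN
  obtain ⟨n, hnmem, hnlt⟩ := (hpairs l).exists_gt (max m N)
  have hmn : m ≤ n := le_of_lt (lt_of_le_of_lt (le_max_left _ _) hnlt)
  have hNn : N ≤ n := le_of_lt (lt_of_le_of_lt (le_max_right _ _) hnlt)
  set c1 : ℕ := max (h.1 n) (f (h.1 n)) with hc1
  set c2 : ℕ := max (c1 + 1) (f (c1 + 1)) with hc2
  set g : ℕ → ℕ := fun i => if i ≤ n then h.1 i else if i = n + 1 then c1 + 1
    else c2 + (i - (n + 1)) with hg
  have hgle : ∀ i, i ≤ n → g i = h.1 i := by intro i hi; simp [hg, hi]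
  have hg1 : g (n + 1) = c1 + 1 := by simp [hg]
  have hg2 : g (n + 2) = c2 + 1 := by
    have h1 : ¬ (n + 2 ≤ n) := by omega
    have h2 : n + 2 ≠ n + 1 := by omega
    simp [hg, h1, h2]
  have hgmono : StrictMono g := by
    apply strictMono_nat_of_lt_succ
    intro i
    rcases lt_trichotomy i n with hi | hi | hi
    · rw [hgle i (le_of_lt hi), hgle (i + 1) hi]
      exact h.2 (lt_add_one i)
    · subst hi
      rw [hgle i le_rfl, hg1]
      have := le_max_left (h.1 i) (f (h.1 i))
      omega
    · rcases Nat.lt_or_ge i (n + 2) with hi2 | hi2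
      · have : i = n + 1 := by omega
        subst this
        rw [hg1, hg2]
        have := le_max_left (c1 + 1) (f (c1 + 1))
        omega
      · have h1 : ¬ (i ≤ n) := by omega
        have h2 : i ≠ n + 1 := by omega
        have h3 : ¬ (i + 1 ≤ n) := by omega
        have h4 : i + 1 ≠ n + 1 := by omega
        simp only [hg, h1, h2, h3, h4, if_false, if_neg]
        omega
  -- the cylinder around g of length n+3
  set W' : Set (ℕ → ℕ) := Set.pi (↑(Finset.range (n + 3)) : Set ℕ)
      (fun i => ({g i} : Set ℕ)) with hW'
  have hW'open : IsOpen W' :=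
    isOpen_set_pi (Finset.finite_toSet _) (fun a _ => isOpen_discrete _)
  set V : Set {h : ℕ → ℕ // StrictMono h} := Subtype.val ⁻¹' W' with hV
  have hVopen : IsOpen V := hW'open.preimage continuous_subtype_val
  have hVmem : ∀ x : {h : ℕ → ℕ // StrictMono h}, x ∈ V →
      ∀ i, i < n + 3 → x.1 i = g i := by
    intro x hx i hi
    have := Set.mem_pi.mp hx i (by simpa using hi)
    simpa using this
  have hgV : (⟨g, hgmono⟩ : {h : ℕ → ℕ // StrictMono h}) ∈ V := by
    refine Set.mem_pi.mpr ?_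
    intro i _; simp
  -- V ⊆ interior (closure Y)
  have hVU : V ⊆ interior (closure Y) := by
    intro x hx
    rw [← hWeq]
    apply hFu
    intro a ha
    have haN : a < N := by
      have : a ≤ F.sup id := Finset.le_sup (f := id) ha
      omega
    have hxa : x.1 a = g a := hVmem x hx a (by omega)
    rw [hxa, hgle a (by omega)]
    exact (hu a ha).2
  -- so g ∈ closure Y, hence V meets Y
  have hgcl : (⟨g, hgmono⟩ : {h : ℕ → ℕ // StrictMono h}) ∈ closure Y :=
    interior_subset (hVU hgV)
  obtain ⟨x, hxV, hxY⟩ := mem_closure_iff.mp hgcl V hVopen hgV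
  -- contradiction at n
  have h1 := hVmem x hxV n (by omega)
  have h2 := hVmem x hxV (n + 1) (by omega)
  have h3 := hVmem x hxV (n + 2) (by omega)
  have := hxY n hmn hnmem.1 hnmem.2
  rw [h1, h2, h3, hgle n le_rfl, hg1, hg2] at this
  have e1 := le_max_right (h.1 n) (f (h.1 n))
  have e2 := le_max_right (c1 + 1) (f (c1 + 1))
  omega
end

section
/- Let 𝒫 be a partition of ℕ into infinite sets each containing infinitely many pairs of consecutive integers, and let 𝔡'(𝒫) be as defined (the least size of a family Y ⊆ ℕ^ℕ not admitting an increasing h with: for all f ∈ Y and all l, infinitely many n satisfy n, n+1 ∈ I_l and f(h(n)) < h(n+1) and f(h(n+1)) < h(n+2)). Then 𝔟 ≤ 𝔡'(𝒫) ≤ 𝔡. -/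
open Filter

noncomputable def bNumber : Cardinal :=
  sInf {c : Cardinal | ∃ Y : Set (ℕ → ℕ), Cardinal.mk Y = c ∧
    ¬ ∃ g : ℕ → ℕ, ∀ f ∈ Y, ∀ᶠ n in atTop, f n ≤ g n}

noncomputable def dNumber : Cardinal :=
  sInf {c : Cardinal | ∃ Y : Set (ℕ → ℕ), Cardinal.mk Y = c ∧
    ∀ f : ℕ → ℕ, ∃ g ∈ Y, ∀ᶠ n in atTop, f n ≤ g n}

noncomputable def dPrime (I : ℕ → Set ℕ) : Cardinal :=
  sInf {c : Cardinal | ∃ Y : Set (ℕ → ℕ), Cardinal.mk Y = c ∧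
    ¬ ∃ h : ℕ → ℕ, StrictMono h ∧ ∀ f ∈ Y, ∀ l,
      {n : ℕ | n ∈ I l ∧ n + 1 ∈ I l ∧
        f (h n) < h (n + 1) ∧ f (h (n + 1)) < h (n + 2)}.Infinite}

theorem stmt11 (I : ℕ → Set ℕ)
    (hpart : ∀ n : ℕ, ∃! l, n ∈ I l)
    (hinf : ∀ l, (I l).Infinite)
    (hpairs : ∀ l, {n : ℕ | n ∈ I l ∧ n + 1 ∈ I l}.Infinite) :
    bNumber ≤ dPrime I ∧ dPrime I ≤ dNumber := by
  -- membership of univ in the dPrime index set (used for nonemptiness)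
  have huniv : ¬ ∃ h : ℕ → ℕ, StrictMono h ∧ ∀ f ∈ (Set.univ : Set (ℕ → ℕ)), ∀ l,
      {n : ℕ | n ∈ I l ∧ n + 1 ∈ I l ∧
        f (h n) < h (n + 1) ∧ f (h (n + 1)) < h (n + 2)}.Infinite := by
    rintro ⟨h, hmono, hprop⟩
    have hinfset := hprop (fun m => h (m + 2)) (Set.mem_univ _) 0
    obtain ⟨n, hn⟩ := hinfset.nonempty
    have h1 : h (n + 1) ≤ h (h n + 2) := hmono.monotone (by
      have hle : n ≤ h n := hmono.le_apply; omega)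
    exact absurd hn.2.2.1 (not_lt.2 h1)
  constructor
  · -- bNumber ≤ dPrime I
    apply csInf_le_csInf (OrderBot.bddBelow _)
    · exact ⟨Cardinal.mk (Set.univ : Set (ℕ → ℕ)), Set.univ, rfl, huniv⟩
    · rintro c ⟨Y, hYc, hnoh⟩
      refine ⟨Y, hYc, ?_⟩
      rintro ⟨g, hg⟩
      apply hnoh
      -- build h from g
      set h : ℕ → ℕ := fun n => Nat.rec 0 (fun _ p => max (g p) p + 1) n with hh
      have hstep : ∀ n, h (n + 1) = max (g (h n)) (h n) + 1 := fun n => rfl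
      have hmono : StrictMono h := strictMono_nat_of_lt_succ (fun n => by
        rw [hstep]; omega)
      refine ⟨h, hmono, ?_⟩
      intro f hf l
      obtain ⟨N, hN⟩ := (eventually_atTop).1 (hg f hf)
      have hsub : {n : ℕ | n ∈ I l ∧ n + 1 ∈ I l} \ Set.Iio N ⊆
          {n : ℕ | n ∈ I l ∧ n + 1 ∈ I l ∧
            f (h n) < h (n + 1) ∧ f (h (n + 1)) < h (n + 2)} := by
        rintro n ⟨⟨hn1, hn2⟩, hnN⟩
        simp only [Set.mem_Iio, not_lt] at hnN
        have hle : ∀ m, N ≤ m → f (h m) < h (m + 1) := by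
          intro m hm
          have h1 : N ≤ h m := le_trans hm (hmono.le_apply)
          have := hN (h m) h1
          rw [hstep]; omega
        exact ⟨hn1, hn2, hle n hnN, hle (n + 1) (by omega)⟩
      exact ((hpairs l).diff (Set.finite_Iio N)).mono hsub
  · -- dPrime I ≤ dNumber
    apply csInf_le_csInf (OrderBot.bddBelow _)
    · exact ⟨Cardinal.mk (Set.univ : Set (ℕ → ℕ)), Set.univ, rfl,
        fun f => ⟨f, Set.mem_univ _, Eventually.of_forall (fun n => le_refl _)⟩⟩
    · rintro c ⟨Y, hYc, hdom⟩
      refine ⟨Y, hYc, ?_⟩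
      rintro ⟨h, hmono, hprop⟩
      obtain ⟨g, hgY, hge⟩ := hdom (fun m => h (m + 2))
      obtain ⟨N, hN⟩ := (eventually_atTop).1 hge
      obtain ⟨n, hn, hnN⟩ := (hprop g hgY 0).exists_gt N
      have h1 : N ≤ h n := le_trans (le_of_lt hnN) hmono.le_apply
      have h2 : h (n + 2) ≤ h (h n + 2) := hmono.monotone (by
        have hle : n ≤ h n := hmono.le_apply; omega)
      have h3 : h (n + 1) < h (n + 2) := hmono (by omega)
      have h4 := hN (h n) h1
      exact absurd hn.2.2.1 (not_lt.2 (by omega))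
end

section
/- Assuming the Continuum Hypothesis, there exists a subgroup G of the Baer–Specker group ℤ^ℕ (with the product topology) such that G is Menger-bounded but G × G is not Menger-bounded. -/
open Pointwise Filter Topology

namespace Stmt16

noncomputable section

open Classical

abbrev S := ℕ → ℕ

variable (e : S ≃ (Cardinal.aleph 1).ord.ToType)

/-- the well-order on `ℕ → ℕ` of type `ω₁`. -/
def rel (a b : S) : Prop := e a < e b

lemma rel_wf : WellFounded (rel e) := InvImage.wf e (IsWellFounded.wf)

lemma rel_trans {a b c : S} (h1 : rel e a b) (h2 : rel e b c) : rel e a c := lt_trans h1 h2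

lemma countable_below (γ : S) : Countable {β : S // rel e β γ} := by
  have h1 : Cardinal.mk (Set.Iio (e γ)) < Cardinal.aleph 1 := Cardinal.mk_Iio_ord_toType (e γ)
  have h2 : (Set.Iio (e γ)).Countable := (Cardinal.countable_iff_lt_aleph_one _).2 h1
  have h3 : Countable {x // x < e γ} := h2.to_subtype
  exact Countable.of_equiv _ (Equiv.subtypeEquiv e (fun β => Iff.rfl) :
    {β : S // rel e β γ} ≃ {x // x < e γ}).symm

/-- one "run" of the construction: direction, magnitude, alignment point. -/
abbrev Stp := (ℤ × ℤ) × ℕ × ℕ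

def Stp.u (s : Stp) : ℤ × ℤ := s.1
def Stp.sig (s : Stp) : ℕ := s.2.1
def Stp.m (s : Stp) : ℕ := s.2.2

/-- ℓ¹ norm of an integer vector -/
def nrm (u : ℤ × ℤ) : ℕ := u.1.natAbs + u.2.natAbs

/-- run boundaries determined by a step function -/
def Bof (f : ℕ → Stp) : ℕ → ℕ
  | 0 => 0
  | t + 1 => (f t).m + 1

def runIdx (f : ℕ → Stp) (q : ℕ) : ℕ := Nat.findGreatest (fun t => Bof f t ≤ q) q

def dirOf (f : ℕ → Stp) (q : ℕ) : ℤ × ℤ := (f (runIdx f q)).u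
def sigOf (f : ℕ → Stp) (q : ℕ) : ℕ := (f (runIdx f q)).sig
def wgt (f : ℕ → Stp) (q : ℕ) : ℕ := sigOf f q * nrm (dirOf f q)

/-- "calmness" of a finite list of stages with target directions, at scale `m` with weight `v`:
every spike before `m` is either in the target direction or `v`-absorbed by `m`. -/
def CoMatureW (data : S → ℕ → Stp) (L : List (S × (ℤ × ℤ))) (v m : ℕ) : Prop :=
  ∀ p ∈ L, ∀ q < m, dirOf (data p.1) q = p.2 ∨ v * wgt (data p.1) q ≤ m

lemma coMatureW_congr {data data' : S → ℕ → Stp} {L : List (S × (ℤ × ℤ))} {v m : ℕ}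
    (h : ∀ p ∈ L, data p.1 = data' p.1) :
    CoMatureW data L v m ↔ CoMatureW data' L v m := by
  unfold CoMatureW
  constructor <;> intro H p hp q hq <;> have := H p hp q hq <;>
    [rw [← h p hp]; rw [h p hp]] <;> exact this

def pick (T : Set ℕ) (b : ℕ) : ℕ :=
  if h : ∃ m ∈ T, b < m then h.choose else b + 1

lemma pick_gt (T : Set ℕ) (b : ℕ) : b < pick T b := by
  unfold pick
  split
  · next h => exact h.choose_spec.2
  · exact Nat.lt_succ_self b

lemma pick_mem {T : Set ℕ} (hT : T.Infinite) (b : ℕ) : pick T b ∈ T := by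
  unfold pick
  have h : ∃ m ∈ T, b < m := hT.exists_gt b
  rw [dif_pos h]
  exact h.choose_spec.1

/-- requirements handled at a given stage -/
def Req (γ : S) := List ({β : S // rel e β γ} × (ℤ × ℤ)) × (ℤ × ℤ) × ℕ

instance (γ : S) : Countable (Req e γ) := by
  haveI := countable_below e γ
  unfold Req
  infer_instance

instance (γ : S) : Nonempty (Req e γ) := ⟨([], (1, 0), 0)⟩

def enum (γ : S) : ℕ → Req e γ :=
  fun t => (exists_surjective_nat (Req e γ)).choose (Nat.unpair t).1

lemma enum_inf (γ : S) (r : Req e γ) : {t | enum e γ t = r}.Infinite := by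
  obtain ⟨k, hk⟩ := (exists_surjective_nat (Req e γ)).choose_spec r
  apply Set.infinite_of_forall_exists_gt
  intro a
  refine ⟨Nat.pair k (a + 1), ?_, ?_⟩
  · show enum e γ _ = r
    unfold enum
    rw [Nat.unpair_pair]
    exact hk
  · exact lt_of_lt_of_le (Nat.lt_succ_self a) (Nat.right_le_pair _ _)

def plainL {γ : S} (L : List ({β : S // rel e β γ} × (ℤ × ℤ))) : List (S × (ℤ × ℤ)) :=
  L.map fun p => (p.1.1, p.2)

def sanitize (u : ℤ × ℤ) : ℤ × ℤ := if u = 0 then (1, 0) else u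

lemma sanitize_ne (u : ℤ × ℤ) : sanitize u ≠ 0 := by
  unfold sanitize; split
  · decide
  · assumption

lemma sanitize_eq {u : ℤ × ℤ} (h : u ≠ 0) : sanitize u = u := if_neg h

/-- one step of the construction at stage `γ`, given prior data `pr`, at state `(B, W)`. -/
def coreStep (γ : S) (pr : S → ℕ → Stp) (B W t : ℕ) : Stp :=
  let r := enum e γ t
  let u := sanitize r.2.1
  let v := r.2.2
  let m := pick {m | CoMatureW pr (plainL e r.1) v m} (max B (v * W))
  (u, (Finset.range (m + 1)).sup γ + m + 1, m)

/-- state `(B, W)` before step `t` -/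
def stW (γ : S) (pr : S → ℕ → Stp) : ℕ → ℕ × ℕ
  | 0 => (0, 0)
  | t + 1 =>
    let BW := stW γ pr t
    let s := coreStep e γ pr BW.1 BW.2 t
    (s.m + 1, BW.2 + s.sig * nrm s.u)

def buildF (γ : S) (pr : S → ℕ → Stp) (t : ℕ) : Stp :=
  coreStep e γ pr (stW e γ pr t).1 (stW e γ pr t).2 t

def junk : ℕ → Stp := fun _ => ((1, 0), 0, 0)

def stage : S → ℕ → Stp :=
  (rel_wf e).fix fun γ ih =>
    buildF e γ fun β => if h : rel e β γ then ih β h else junk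

lemma stage_eq (γ : S) :
    stage e γ = buildF e γ fun β => if h : rel e β γ then stage e β else junk := by
  unfold stage
  exact WellFounded.fix_eq _ _ _


section Lemmas

variable (γ : S) (pr : S → ℕ → Stp)

lemma coreStep_u (B W t : ℕ) : (coreStep e γ pr B W t).u = sanitize (enum e γ t).2.1 := rfl

lemma coreStep_m (B W t : ℕ) :
    (coreStep e γ pr B W t).m =
      pick {m | CoMatureW pr (plainL e (enum e γ t).1) (enum e γ t).2.2 m}
        (max B ((enum e γ t).2.2 * W)) := rfl

lemma coreStep_sig (B W t : ℕ) :
    (coreStep e γ pr B W t).sig =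
      (Finset.range ((coreStep e γ pr B W t).m + 1)).sup γ + (coreStep e γ pr B W t).m + 1 := rfl

lemma coreStep_m_gt (B W t : ℕ) : max B ((enum e γ t).2.2 * W) < (coreStep e γ pr B W t).m := by
  rw [coreStep_m]; exact pick_gt _ _

lemma stW_fst (t : ℕ) : (stW e γ pr t).1 = Bof (buildF e γ pr) t := by
  cases t with
  | zero => rfl
  | succ t => rfl

lemma buildF_m_gt (t : ℕ) : Bof (buildF e γ pr) t < (buildF e γ pr t).m := by
  have h := coreStep_m_gt e γ pr (stW e γ pr t).1 (stW e γ pr t).2 t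
  have h2 : (stW e γ pr t).1 < (buildF e γ pr t).m :=
    lt_of_le_of_lt (le_max_left _ _) h
  rwa [stW_fst] at h2

lemma Bof_buildF_succ (t : ℕ) : Bof (buildF e γ pr) (t + 1) = (buildF e γ pr t).m + 1 := rfl

lemma Bof_strictMono : StrictMono (Bof (buildF e γ pr)) := by
  apply strictMono_nat_of_lt_succ
  intro t
  rw [Bof_buildF_succ]
  exact Nat.lt_succ_of_lt (buildF_m_gt e γ pr t)

lemma Bof_le_self (t : ℕ) : t ≤ Bof (buildF e γ pr) t := by
  induction t with
  | zero => exact Nat.zero_le _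
  | succ t ih => exact Nat.succ_le_of_lt (lt_of_le_of_lt ih (Bof_strictMono e γ pr (Nat.lt_succ_self t)))

lemma runIdx_spec1 (f : ℕ → Stp) (q : ℕ) : Bof f (runIdx f q) ≤ q := by
  unfold runIdx
  exact Nat.findGreatest_spec (P := fun t => Bof f t ≤ q) (Nat.zero_le q) (Nat.zero_le q)

lemma runIdx_spec2 (q : ℕ) :
    q < Bof (buildF e γ pr) (runIdx (buildF e γ pr) q + 1) := by
  by_contra h
  push_neg at h
  have h2 : runIdx (buildF e γ pr) q + 1 ≤ q :=
    le_trans (Bof_le_self e γ pr _) h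
  exact Nat.findGreatest_is_greatest (Nat.lt_succ_self _) h2 h

lemma runIdx_eq {t q : ℕ} (h1 : Bof (buildF e γ pr) t ≤ q)
    (h2 : q < Bof (buildF e γ pr) (t + 1)) : runIdx (buildF e γ pr) q = t := by
  have hle : t ≤ runIdx (buildF e γ pr) q :=
    Nat.le_findGreatest (le_trans (Bof_le_self e γ pr t) h1) h1
  rcases Nat.lt_or_ge (runIdx (buildF e γ pr) q) (t + 1) with h | h
  · omega
  · exfalso
    have := (Bof_strictMono e γ pr).monotone h
    have := runIdx_spec1 (buildF e γ pr) q
    omega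

lemma stW_snd_mono : Monotone fun t => (stW e γ pr t).2 := by
  apply monotone_nat_of_le_succ
  intro t
  show (stW e γ pr t).2 ≤ (stW e γ pr t).2 + _
  exact Nat.le_add_right _ _

lemma wgt_le_W {t' t : ℕ} (h : t' < t) :
    (buildF e γ pr t').sig * nrm (buildF e γ pr t').u ≤ (stW e γ pr t).2 := by
  have h1 : (buildF e γ pr t').sig * nrm (buildF e γ pr t').u ≤ (stW e γ pr (t' + 1)).2 := by
    show _ ≤ (stW e γ pr t').2 + _
    exact Nat.le_add_left _ _
  exact le_trans h1 (stW_snd_mono e γ pr h)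

end Lemmas

section Stage

/-- the stage function satisfies the `buildF` equations with prior data `stage` itself -/
def prior (γ : S) : S → ℕ → Stp := fun β => if rel e β γ then stage e β else junk

lemma stage_eq' (γ : S) : stage e γ = buildF e γ (prior e γ) := by
  rw [stage_eq]; rfl

lemma stage_u_ne (γ : S) (t : ℕ) : (stage e γ t).u ≠ 0 := by
  rw [stage_eq']
  show (coreStep e γ _ _ _ t).u ≠ 0
  rw [coreStep_u]
  exact sanitize_ne _

lemma stage_sig_gt (γ : S) (t n : ℕ) (hn : n ≤ (stage e γ t).m) : γ n < (stage e γ t).sig := by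
  conv_rhs => rw [stage_eq']
  rw [stage_eq'] at hn
  show _ < (coreStep e γ _ _ _ t).sig
  rw [coreStep_sig]
  have : γ n ≤ (Finset.range ((coreStep e γ (prior e γ) (stW e γ (prior e γ) t).1
      (stW e γ (prior e γ) t).2 t).m + 1)).sup γ :=
    Finset.le_sup (Finset.mem_range.2 (Nat.lt_succ_of_le hn))
  omega

/-- the two generator sequences of stage `γ` -/
def x1 (γ : S) : ℕ → ℤ := fun q => (sigOf (stage e γ) q : ℤ) * (dirOf (stage e γ) q).1
def x2 (γ : S) : ℕ → ℤ := fun q => (sigOf (stage e γ) q : ℤ) * (dirOf (stage e γ) q).2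

lemma escape (γ : S) (n : ℕ) : γ n < max (x1 e γ n).natAbs (x2 e γ n).natAbs := by
  have hn : n ≤ (stage e γ (runIdx (stage e γ) n)).m := by
    have h2 := runIdx_spec2 e γ (prior e γ) n
    rw [← stage_eq'] at h2
    have h3 : Bof (stage e γ) (runIdx (stage e γ) n + 1)
        = (stage e γ (runIdx (stage e γ) n)).m + 1 := rfl
    omega
  have hsig : γ n < (stage e γ (runIdx (stage e γ) n)).sig := stage_sig_gt e γ _ n hn
  have hu : (stage e γ (runIdx (stage e γ) n)).u ≠ 0 := stage_u_ne e γ _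
  have habs : max (x1 e γ n).natAbs (x2 e γ n).natAbs
      = (stage e γ (runIdx (stage e γ) n)).sig *
        max (stage e γ (runIdx (stage e γ) n)).u.1.natAbs
          (stage e γ (runIdx (stage e γ) n)).u.2.natAbs := by
    unfold x1 x2 sigOf dirOf
    rw [Int.natAbs_mul, Int.natAbs_mul, Int.natAbs_natCast, ← Nat.mul_max_mul_left]
  have humax : 1 ≤ max (stage e γ (runIdx (stage e γ) n)).u.1.natAbs
      (stage e γ (runIdx (stage e γ) n)).u.2.natAbs := by
    rcases Nat.eq_zero_or_pos (max (stage e γ (runIdx (stage e γ) n)).u.1.natAbs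
      (stage e γ (runIdx (stage e γ) n)).u.2.natAbs) with h | h
    · exfalso
      apply hu
      have h1 : (stage e γ (runIdx (stage e γ) n)).u.1.natAbs = 0 := by omega
      have h2 : (stage e γ (runIdx (stage e γ) n)).u.2.natAbs = 0 := by omega
      rw [Int.natAbs_eq_zero] at h1 h2
      exact Prod.ext h1 h2
    · exact h
  calc γ n < (stage e γ (runIdx (stage e γ) n)).sig := hsig
    _ = (stage e γ (runIdx (stage e γ) n)).sig * 1 := (Nat.mul_one _).symm
    _ ≤ _ := by rw [habs]; exact Nat.mul_le_mul_left _ humax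

end Stage

section INV

def Good (L : List (S × (ℤ × ℤ))) (γ : S) : Prop :=
  (∀ p ∈ L, (p.1 = γ ∨ rel e p.1 γ) ∧ p.2 ≠ 0) ∧ (L.map Prod.fst).Nodup

lemma exists_max : ∀ l : List S, l ≠ [] → ∃ δ ∈ l, ∀ β ∈ l, β = δ ∨ rel e β δ := by
  intro l
  induction l with
  | nil => intro h; exact absurd rfl h
  | cons a t ih =>
    intro _
    rcases eq_or_ne t [] with rfl | ht
    · exact ⟨a, List.mem_cons_self, by
        intro β hβ
        rw [List.mem_singleton] at hβ
        exact Or.inl hβ⟩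
    · obtain ⟨δ, hδt, hmax⟩ := ih ht
      rcases lt_trichotomy (e a) (e δ) with h | h | h
      · exact ⟨δ, List.mem_cons_of_mem _ hδt, by
          intro β hβ
          rcases List.mem_cons.1 hβ with rfl | hβ
          · exact Or.inr h
          · exact hmax β hβ⟩
      · have : a = δ := e.injective h
        subst this
        exact ⟨a, List.mem_cons_self, by
          intro β hβ
          rcases List.mem_cons.1 hβ with rfl | hβ
          · exact Or.inl rfl
          · exact hmax β hβ⟩
      · exact ⟨a, List.mem_cons_self, by
          intro β hβ
          rcases List.mem_cons.1 hβ with rfl | hβ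
          · exact Or.inl rfl
          · rcases hmax β hβ with rfl | hβ'
            · exact Or.inr h
            · exact Or.inr (rel_trans e hβ' h)⟩

lemma plainL_pmap_aux (γ : S) : ∀ (l : List (S × (ℤ × ℤ))) (H : ∀ p ∈ l, rel e p.1 γ),
    List.map (fun (p : {β : S // rel e β γ} × (ℤ × ℤ)) => (p.1.1, p.2))
      (l.pmap (fun p h => ((⟨p.1, h⟩ : {β : S // rel e β γ}), p.2)) H) = l := by
  intro l
  induction l with
  | nil => intro H; rfl
  | cons a t ih =>
    intro H
    show (a.1, a.2) :: _ = a :: t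
    rw [ih (fun p hp => H p (List.mem_cons_of_mem _ hp))]

lemma plainL_pmap (γ : S) (l : List (S × (ℤ × ℤ))) (H : ∀ p ∈ l, rel e p.1 γ) :
    plainL e (l.pmap (fun p h => ((⟨p.1, h⟩ : {β : S // rel e β γ}), p.2)) H) = l :=
  plainL_pmap_aux e γ l H

lemma stage_m_spec (γ : S) (t : ℕ) :
    (stage e γ t).m =
      pick {m | CoMatureW (prior e γ) (plainL e (enum e γ t).1) (enum e γ t).2.2 m}
        (max (stW e γ (prior e γ) t).1 ((enum e γ t).2.2 * (stW e γ (prior e γ) t).2)) := by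
  conv_lhs => rw [stage_eq']
  rfl

lemma stage_u_spec (γ : S) (t : ℕ) : (stage e γ t).u = sanitize (enum e γ t).2.1 := by
  conv_lhs => rw [stage_eq']
  rfl

theorem INV (γ : S) : ∀ L : List (S × (ℤ × ℤ)), Good e L γ → ∀ v : ℕ,
    {m | CoMatureW (stage e) L v m}.Infinite := by
  induction γ using WellFounded.induction (rel_wf e) with
  | _ γ IH => ?_
  intro L hG v
  classical
  -- trivial case : empty list
  rcases eq_or_ne L [] with rfl | hLne
  · have : {m | CoMatureW (stage e) [] v m} = Set.univ := by
      ext m; simp [CoMatureW]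
    rw [this]
    exact Set.infinite_univ
  by_cases hL : ∃ p ∈ L, p.1 = γ
  swap
  · -- all stages of L are strictly below γ : apply IH at the maximum
    push_neg at hL
    have hstages : ∀ p ∈ L, rel e p.1 γ := by
      intro p hp
      rcases (hG.1 p hp).1 with h | h
      · exact absurd h (hL p hp)
      · exact h
    have hmapne : L.map Prod.fst ≠ [] := by
      simpa using hLne
    obtain ⟨δ, hδmem, hmax⟩ := exists_max e _ hmapne
    obtain ⟨p₀, hp₀, hp₀eq⟩ := List.mem_map.1 hδmem
    have hrelδ : rel e δ γ := hp₀eq ▸ hstages p₀ hp₀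
    apply IH δ hrelδ
    refine ⟨?_, hG.2⟩
    intro p hp
    exact ⟨hmax p.1 (List.mem_map_of_mem hp), (hG.1 p hp).2⟩
  -- main case : γ occurs in L
  obtain ⟨p₀, hp₀L, hp₀γ⟩ := hL
  have hdir : p₀.2 ≠ 0 := (hG.1 p₀ hp₀L).2
  set L' : List (S × (ℤ × ℤ)) := L.filter (fun p => p.1 ≠ γ) with hL'
  have hL'mem : ∀ p, p ∈ L' → p ∈ L ∧ p.1 ≠ γ := by
    intro p hp
    have := List.mem_filter.1 hp
    simpa using this
  have hL'rel : ∀ p ∈ L', rel e p.1 γ := by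
    intro p hp
    rcases (hG.1 p (hL'mem p hp).1).1 with h | h
    · exact absurd h (hL'mem p hp).2
    · exact h
  -- the requirement
  set L'' : List ({β : S // rel e β γ} × (ℤ × ℤ)) :=
    L'.pmap (fun p (h : rel e p.1 γ) => ((⟨p.1, h⟩ : {β : S // rel e β γ}), p.2)) hL'rel with hL''
  have hplain : plainL e L'' = L' := plainL_pmap e γ L' hL'rel
  set rq : Req e γ := (L'', p₀.2, v) with hrq
  -- infinitude of the search set
  have hsearch : {m | CoMatureW (stage e) L' v m}.Infinite := by
    rcases eq_or_ne L' [] with h0 | h0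
    · have : {m | CoMatureW (stage e) L' v m} = Set.univ := by
        ext m; simp [CoMatureW, h0]
      rw [this]; exact Set.infinite_univ
    · have hmapne : L'.map Prod.fst ≠ [] := by simpa using h0
      obtain ⟨δ, hδmem, hmax⟩ := exists_max e _ hmapne
      obtain ⟨q₀, hq₀, hq₀eq⟩ := List.mem_map.1 hδmem
      have hrelδ : rel e δ γ := hq₀eq ▸ hL'rel q₀ hq₀
      apply IH δ hrelδ
      constructor
      · intro p hp
        exact ⟨hmax p.1 (List.mem_map_of_mem hp), (hG.1 p (hL'mem p hp).1).2⟩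
      · exact hG.2.sublist (List.Sublist.map _ (List.filter_sublist (l := L)))
  have hsearch' : {m | CoMatureW (prior e γ) L' v m}.Infinite := by
    have : {m | CoMatureW (prior e γ) L' v m} = {m | CoMatureW (stage e) L' v m} := by
      ext m
      exact coMatureW_congr (fun p hp => by
        unfold prior
        rw [if_pos (hL'rel p hp)])
    rw [this]; exact hsearch
  -- each step handling the requirement produces a good alignment point
  have hkey : ∀ t, enum e γ t = rq → CoMatureW (stage e) L v ((stage e γ t).m) ∧ t < (stage e γ t).m := by
    intro t hrt
    have hm := stage_m_spec e γ t
    rw [hrt] at hm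
    have hm' : (stage e γ t).m =
        pick {m | CoMatureW (prior e γ) L' v m}
          (max (stW e γ (prior e γ) t).1 (v * (stW e γ (prior e γ) t).2)) := by
      rw [hm, hplain]
    have hmem : (stage e γ t).m ∈ {m | CoMatureW (prior e γ) L' v m} := by
      rw [hm']; exact pick_mem hsearch' _
    have hgt : max (stW e γ (prior e γ) t).1 (v * (stW e γ (prior e γ) t).2) < (stage e γ t).m := by
      rw [hm']; exact pick_gt _ _
    have hB : Bof (stage e γ) t < (stage e γ t).m := by
      have : (stW e γ (prior e γ) t).1 < (stage e γ t).m := lt_of_le_of_lt (le_max_left _ _) hgt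
      rwa [stW_fst, ← stage_eq'] at this
    have hW : v * (stW e γ (prior e γ) t).2 < (stage e γ t).m :=
      lt_of_le_of_lt (le_max_right _ _) hgt
    constructor
    swap
    · exact lt_of_le_of_lt (le_trans (Bof_le_self e γ (prior e γ) t)
        (le_of_eq (by rw [← stage_eq']))) hB
    intro p hp q hq
    by_cases hpγ : p.1 = γ
    · -- p is the γ-entry : p = p₀
      have hpp₀ : p = p₀ :=
        List.inj_on_of_nodup_map hG.2 hp hp₀L (by rw [hpγ, hp₀γ])
      subst hpp₀
      -- compute the run index of q
      have ht' : runIdx (stage e γ) q ≤ t := by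
        by_contra hc
        push_neg at hc
        have h1 : Bof (stage e γ) (t + 1) ≤ Bof (stage e γ) (runIdx (stage e γ) q) := by
          have := (Bof_strictMono e γ (prior e γ)).monotone hc
          rwa [← stage_eq'] at this
        have h2 : Bof (stage e γ) (runIdx (stage e γ) q) ≤ q := runIdx_spec1 _ q
        have h3 : Bof (stage e γ) (t + 1) = (stage e γ t).m + 1 := rfl
        omega
      rcases Nat.lt_or_ge (runIdx (stage e γ) q) t with ht'' | ht''
      · -- old run : absorbed
        right
        rw [hpγ]
        have hwle : wgt (stage e γ) q ≤ (stW e γ (prior e γ) t).2 := by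
          unfold wgt sigOf dirOf
          have := wgt_le_W e γ (prior e γ) ht''
          rwa [← stage_eq'] at this
        calc v * wgt (stage e γ) q ≤ v * (stW e γ (prior e γ) t).2 := Nat.mul_le_mul_left _ hwle
          _ ≤ (stage e γ t).m := le_of_lt hW
      · -- current run : target direction
        left
        have htt : runIdx (stage e γ) q = t := le_antisymm ht' ht''
        rw [hpγ]
        unfold dirOf
        rw [htt, stage_u_spec, hrt]
        exact sanitize_eq hdir
    · -- p comes from L'
      have hpL' : p ∈ L' := by
        rw [hL']
        rw [List.mem_filter]
        simpa using ⟨hp, hpγ⟩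
      have := hmem p hpL' q hq
      rcases this with h | h
      · left
        rwa [show prior e γ p.1 = stage e p.1 from if_pos (hL'rel p hpL')] at h
      · right
        rwa [show prior e γ p.1 = stage e p.1 from if_pos (hL'rel p hpL')] at h
  -- conclude
  apply Set.infinite_of_forall_exists_gt
  intro a
  obtain ⟨t, htT, hta⟩ := (enum_inf e γ rq).exists_gt a
  obtain ⟨hco, hlt⟩ := hkey t htT
  exact ⟨(stage e γ t).m, hco, lt_trans hta hlt⟩

end INV

section Group

lemma natAbs_sum_le {α : Type*} (s : Finset α) (f : α → ℤ) :
    (∑ i ∈ s, f i).natAbs ≤ ∑ i ∈ s, (f i).natAbs := by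
  classical
  induction s using Finset.cons_induction with
  | empty => simp
  | cons a s ha ih =>
    rw [Finset.sum_cons, Finset.sum_cons]
    exact le_trans (Int.natAbs_add_le _ _) (Nat.add_le_add_left ih _)

/-- the submodule of all finite integer combinations of the generators -/
def A : Submodule ℤ (ℕ → ℤ) where
  carrier := {g | ∃ (a b : S → ℤ) (D : Finset S),
    (∀ β, β ∉ D → a β = 0 ∧ b β = 0) ∧
    g = fun q => ∑ β ∈ D, (a β * x1 e β q + b β * x2 e β q)}
  zero_mem' := ⟨0, 0, ∅, fun β _ => ⟨rfl, rfl⟩, by funext q; simp⟩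
  add_mem' := by
    rintro g₁ g₂ ⟨a₁, b₁, D₁, hv₁, rfl⟩ ⟨a₂, b₂, D₂, hv₂, rfl⟩
    classical
    refine ⟨a₁ + a₂, b₁ + b₂, D₁ ∪ D₂, ?_, ?_⟩
    · intro β hβ
      have h1 := hv₁ β (fun h => hβ (Finset.mem_union_left _ h))
      have h2 := hv₂ β (fun h => hβ (Finset.mem_union_right _ h))
      constructor <;> simp [Pi.add_apply, h1.1, h1.2, h2.1, h2.2]
    · funext q
      have key : ∀ (a b : S → ℤ) (D : Finset S), (∀ β, β ∉ D → a β = 0 ∧ b β = 0) →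
          ∑ β ∈ D, (a β * x1 e β q + b β * x2 e β q)
          = ∑ β ∈ D₁ ∪ D₂, (a β * x1 e β q + b β * x2 e β q) → True := fun _ _ _ _ _ => trivial
      have h1 : ∑ β ∈ D₁, (a₁ β * x1 e β q + b₁ β * x2 e β q)
          = ∑ β ∈ D₁ ∪ D₂, (a₁ β * x1 e β q + b₁ β * x2 e β q) := by
        apply Finset.sum_subset (Finset.subset_union_left)
        intro β _ hβ
        rcases hv₁ β hβ with ⟨ha, hb⟩
        simp [ha, hb]
      have h2 : ∑ β ∈ D₂, (a₂ β * x1 e β q + b₂ β * x2 e β q)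
          = ∑ β ∈ D₁ ∪ D₂, (a₂ β * x1 e β q + b₂ β * x2 e β q) := by
        apply Finset.sum_subset (Finset.subset_union_right)
        intro β _ hβ
        rcases hv₂ β hβ with ⟨ha, hb⟩
        simp [ha, hb]
      simp only [Pi.add_apply]
      rw [h1, h2, ← Finset.sum_add_distrib]
      apply Finset.sum_congr rfl
      intro β _
      ring
  smul_mem' := by
    rintro c g ⟨a, b, D, hv, rfl⟩
    refine ⟨c • a, c • b, D, ?_, ?_⟩
    · intro β hβ
      rcases hv β hβ with ⟨ha, hb⟩
      constructor <;> simp [Pi.smul_apply, ha, hb]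
    · funext q
      simp only [Pi.smul_apply, smul_eq_mul]
      rw [Finset.mul_sum]
      apply Finset.sum_congr rfl
      intro β _
      ring

/-- the generators -/
def gens : Set (ℕ → ℤ) := {f | ∃ γ : S, f = x1 e γ ∨ f = x2 e γ}

lemma gens_subset_A : gens e ⊆ (A e : Set (ℕ → ℤ)) := by
  classical
  rintro f ⟨γ, hf | hf⟩
  · exact ⟨fun β => if β = γ then 1 else 0, 0, {γ}, by
      intro β hβ
      simp only [Finset.mem_singleton] at hβ
      exact ⟨if_neg hβ, rfl⟩, by
      funext q
      simp [hf]⟩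
  · exact ⟨0, fun β => if β = γ then 1 else 0, {γ}, by
      intro β hβ
      simp only [Finset.mem_singleton] at hβ
      exact ⟨rfl, if_neg hβ⟩, by
      funext q
      simp [hf]⟩

lemma span_le_A : Submodule.span ℤ (gens e) ≤ A e :=
  Submodule.span_le.2 (gens_subset_A e)

/-- every member of the group has infinitely many "dips" below the identity -/
theorem dips {g : ℕ → ℤ} (hg : g ∈ A e) :
    {m : ℕ | ∀ q < m, (g q).natAbs ≤ m}.Infinite := by
  classical
  obtain ⟨a, b, D, hv, rfl⟩ := hg
  set D' : Finset S := D.filter (fun β => ¬(a β = 0 ∧ b β = 0)) with hD'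
  have hgeq : ∀ q, ∑ β ∈ D, (a β * x1 e β q + b β * x2 e β q)
      = ∑ β ∈ D', (a β * x1 e β q + b β * x2 e β q) := by
    intro q
    rw [hD']
    symm
    apply Finset.sum_filter_of_ne
    intro β _ hne
    intro hab
    apply hne
    rw [hab.1, hab.2]
    ring
  rcases D'.eq_empty_or_nonempty with h0 | h0
  · apply Set.infinite_of_forall_exists_gt
    intro m
    refine ⟨m + 1, ?_, Nat.lt_succ_self m⟩
    intro q _
    show (∑ β ∈ D, (a β * x1 e β q + b β * x2 e β q)).natAbs ≤ m + 1
    rw [hgeq, h0]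
    simp
  · -- main case
    have htoList : D'.toList ≠ [] := by
      intro h
      rcases h0 with ⟨β, hβ⟩
      have : β ∈ D'.toList := (Finset.mem_toList).2 hβ
      rw [h] at this
      exact List.not_mem_nil this
    obtain ⟨δ, hδmem, hmax⟩ := exists_max e D'.toList htoList
    set L : List (S × (ℤ × ℤ)) := D'.toList.map (fun β => (β, (-(b β), a β))) with hLdef
    have hGood : Good e L δ := by
      constructor
      · rintro p hp
        obtain ⟨β, hβ, rfl⟩ := List.mem_map.1 hp
        refine ⟨hmax β hβ, ?_⟩
        intro hcontra
        have hβD' : β ∈ D' := Finset.mem_toList.1 hβ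
        have hne := (Finset.mem_filter.1 hβD').2
        apply hne
        have hcontra' : -(b β) = 0 ∧ a β = 0 := by
          rw [show (0 : ℤ × ℤ) = ((0 : ℤ), (0 : ℤ)) from rfl, Prod.mk.injEq] at hcontra
          exact hcontra
        exact ⟨hcontra'.2, neg_eq_zero.1 hcontra'.1⟩
      · rw [hLdef]
        have : (List.map Prod.fst (D'.toList.map (fun β => (β, (-(b β), a β))))) = D'.toList := by
          rw [List.map_map]
          show List.map id D'.toList = D'.toList
          exact List.map_id _
        rw [this]
        exact Finset.nodup_toList D'
    set v : ℕ := 1 + ∑ β ∈ D', ((a β).natAbs + (b β).natAbs) with hvdef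
    have hinf := INV e δ L hGood v
    apply Set.Infinite.mono _ hinf
    intro m hm
    intro q hq
    show (∑ β ∈ D, (a β * x1 e β q + b β * x2 e β q)).natAbs ≤ m
    rw [hgeq]
    -- bound each term
    have hterm : ∀ β ∈ D', v * (a β * x1 e β q + b β * x2 e β q).natAbs
        ≤ ((a β).natAbs + (b β).natAbs) * m := by
      intro β hβ
      have hpL : (β, (-(b β), a β)) ∈ L := by
        rw [hLdef]
        exact List.mem_map_of_mem (Finset.mem_toList.2 hβ)
      rcases hm (β, (-(b β), a β)) hpL q hq with hdir | habs
      · -- orthogonal direction : the term vanishes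
        have : a β * x1 e β q + b β * x2 e β q = 0 := by
          unfold x1 x2
          rw [hdir]
          show a β * (_ * (-(b β))) + b β * (_ * (a β)) = 0
          ring
        rw [this]
        simp
      · -- absorbed
        have h1 : (a β * x1 e β q + b β * x2 e β q).natAbs
            ≤ ((a β).natAbs + (b β).natAbs) * wgt (stage e β) q := by
          have hx1 : (x1 e β q).natAbs = sigOf (stage e β) q * (dirOf (stage e β) q).1.natAbs := by
            unfold x1
            rw [Int.natAbs_mul, Int.natAbs_natCast]
          have hx2 : (x2 e β q).natAbs = sigOf (stage e β) q * (dirOf (stage e β) q).2.natAbs := by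
            unfold x2
            rw [Int.natAbs_mul, Int.natAbs_natCast]
          calc (a β * x1 e β q + b β * x2 e β q).natAbs
              ≤ (a β * x1 e β q).natAbs + (b β * x2 e β q).natAbs := Int.natAbs_add_le _ _
            _ = (a β).natAbs * (x1 e β q).natAbs + (b β).natAbs * (x2 e β q).natAbs := by
                rw [Int.natAbs_mul, Int.natAbs_mul]
            _ ≤ ((a β).natAbs + (b β).natAbs) * wgt (stage e β) q := by
                rw [hx1, hx2]
                unfold wgt nrm
                nlinarith [Nat.zero_le ((a β).natAbs * (sigOf (stage e β) q *
                    (dirOf (stage e β) q).2.natAbs)),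
                  Nat.zero_le ((b β).natAbs * (sigOf (stage e β) q *
                    (dirOf (stage e β) q).1.natAbs))]
        calc v * (a β * x1 e β q + b β * x2 e β q).natAbs
            ≤ v * (((a β).natAbs + (b β).natAbs) * wgt (stage e β) q) := Nat.mul_le_mul_left _ h1
          _ = ((a β).natAbs + (b β).natAbs) * (v * wgt (stage e β) q) := by ring
          _ ≤ ((a β).natAbs + (b β).natAbs) * m := Nat.mul_le_mul_left _ habs
    -- sum up
    have hsum : v * (∑ β ∈ D', (a β * x1 e β q + b β * x2 e β q)).natAbs ≤ (v - 1) * m := by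
      calc v * (∑ β ∈ D', (a β * x1 e β q + b β * x2 e β q)).natAbs
          ≤ v * ∑ β ∈ D', (a β * x1 e β q + b β * x2 e β q).natAbs :=
            Nat.mul_le_mul_left _ (natAbs_sum_le _ _)
        _ = ∑ β ∈ D', v * (a β * x1 e β q + b β * x2 e β q).natAbs := Finset.mul_sum _ _ _
        _ ≤ ∑ β ∈ D', ((a β).natAbs + (b β).natAbs) * m := Finset.sum_le_sum hterm
        _ = (∑ β ∈ D', ((a β).natAbs + (b β).natAbs)) * m := (Finset.sum_mul _ _ _).symm
        _ = (v - 1) * m := by rw [hvdef]; simp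
    have hvpos : 0 < v := by rw [hvdef]; omega
    have : v * (∑ β ∈ D', (a β * x1 e β q + b β * x2 e β q)).natAbs ≤ v * m := by
      calc v * _ ≤ (v - 1) * m := hsum
        _ ≤ v * m := Nat.mul_le_mul_right _ (Nat.sub_le _ _)
    exact Nat.le_of_mul_le_mul_left this hvpos

end Group



section Topology

lemma cylinder_mem_nhds (k : ℕ) : {x : ℕ → ℤ | ∀ i < k, x i = 0} ∈ 𝓝 (0 : ℕ → ℤ) := by
  rw [nhds_pi]
  refine Filter.mem_pi.2 ⟨{i | i < k}, Set.finite_Iio k, fun _ => {0}, fun i => ?_, ?_⟩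
  · exact IsOpen.mem_nhds (isOpen_discrete _) rfl
  · intro x hx i hik
    exact hx i hik

/-- the subgroup generated by all `x1 γ, x2 γ` -/
def grp : AddSubgroup (ℕ → ℤ) := (Submodule.span ℤ (gens e)).toAddSubgroup

lemma mem_grp_x1 (γ : S) : x1 e γ ∈ grp e :=
  Submodule.mem_toAddSubgroup _ |>.2 (Submodule.subset_span ⟨γ, Or.inl rfl⟩)

lemma mem_grp_x2 (γ : S) : x2 e γ ∈ grp e :=
  Submodule.mem_toAddSubgroup _ |>.2 (Submodule.subset_span ⟨γ, Or.inr rfl⟩)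

lemma mem_A_of_mem_grp {g : ℕ → ℤ} (hg : g ∈ grp e) : g ∈ A e :=
  span_le_A e ((Submodule.mem_toAddSubgroup _).1 hg)

lemma nhds_grp_extract {U : Set ↥(grp e)} (hU : U ∈ 𝓝 (0 : ↥(grp e))) :
    ∃ k, {g : ↥(grp e) | ∀ i < k, (g : ℕ → ℤ) i = 0} ⊆ U := by
  rw [nhds_subtype] at hU
  obtain ⟨V, hV, hVU⟩ := hU
  rw [ZeroMemClass.coe_zero, nhds_pi] at hV
  obtain ⟨I, hIfin, t, ht, hsub⟩ := Filter.mem_pi.1 hV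
  refine ⟨(hIfin.toFinset.sup id) + 1, ?_⟩
  intro g hg
  apply hVU
  show (g : ℕ → ℤ) ∈ V
  apply hsub
  intro i hi
  have hik : i < (hIfin.toFinset.sup id) + 1 := by
    have : i ≤ hIfin.toFinset.sup id := Finset.le_sup (f := id) (hIfin.mem_toFinset.2 hi)
    omega
  rw [hg i hik]
  exact mem_of_mem_nhds (ht i)

theorem pos : MengerBoundedAdd ↥(grp e) := by
  classical
  intro U hU
  have hK : ∀ n, ∃ k, {g : ↥(grp e) | ∀ i < k, (g : ℕ → ℤ) i = 0} ⊆ U n :=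
    fun n => nhds_grp_extract e (hU n)
  choose K hKs using hK
  set K' : ℕ → ℕ := fun n => n + (Finset.range (n + 1)).sup K with hK'def
  have hK'mono : StrictMono K' := by
    apply strictMono_nat_of_lt_succ
    intro n
    have : (Finset.range (n + 1)).sup K ≤ (Finset.range (n + 1 + 1)).sup K :=
      Finset.sup_mono (Finset.range_subset_range.2 (Nat.le_succ _))
    simp only [hK'def]
    omega
  have hK'geK : ∀ n, K n ≤ K' n := by
    intro n
    have : K n ≤ (Finset.range (n + 1)).sup K :=
      Finset.le_sup (Finset.mem_range.2 (Nat.lt_succ_self n))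
    simp only [hK'def]
    omega
  have hK'ge : ∀ n, n ≤ K' n := fun n => Nat.le_add_right _ _
  -- the finite sets of patterns
  set Pset : ∀ n : ℕ, Set (Fin (K' n) → ℤ) := fun n =>
    {p | ∃ g : ↥(grp e), (∀ i : Fin (K' n), (g : ℕ → ℤ) i = p i) ∧
      ∀ i : Fin (K' n), (p i).natAbs ≤ K' (n + 1)} with hPdef
  have hPfin : ∀ n, (Pset n).Finite := by
    intro n
    apply Set.Finite.subset (Set.Finite.pi (fun _ : Fin (K' n) =>
      Set.finite_Icc (-(K' (n + 1) : ℤ)) (K' (n + 1))))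
    rintro p ⟨g, hgp, hbd⟩
    intro i _
    have := hbd i
    simp only [Set.mem_Icc]
    omega
  have hrep : ∀ n (p : Fin (K' n) → ℤ), p ∈ Pset n →
      ∃ g : ↥(grp e), ∀ i : Fin (K' n), (g : ℕ → ℤ) i = p i := by
    rintro n p ⟨g, hgp, _⟩
    exact ⟨g, hgp⟩
  refine ⟨fun n => (hPfin n).toFinset.attach.image
    (fun pp => Classical.choose (hrep n pp.1 ((hPfin n).mem_toFinset.1 pp.2))), ?_⟩
  intro g
  -- dips of g
  have hdip := dips e (mem_A_of_mem_grp e g.2)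
  obtain ⟨m, hmdip, hm0⟩ := hdip.exists_gt (K' 0)
  -- the scale
  set n := Nat.findGreatest (fun n => K' n ≤ m) m with hndef
  have hn1 : K' n ≤ m :=
    Nat.findGreatest_spec (P := fun n => K' n ≤ m) (Nat.zero_le m) (le_of_lt hm0)
  have hn2 : m < K' (n + 1) := by
    by_contra hc
    push_neg at hc
    have hle : n + 1 ≤ m := le_trans (hK'ge (n + 1)) hc
    exact Nat.findGreatest_is_greatest (Nat.lt_succ_self n) hle hc
  -- the pattern of g
  set p : Fin (K' n) → ℤ := fun i => (g : ℕ → ℤ) i with hpdef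
  have hpmem : p ∈ Pset n := by
    refine ⟨g, fun i => rfl, ?_⟩
    intro i
    have hi : (i : ℕ) < m := lt_of_lt_of_le i.2 hn1
    have := hmdip (i : ℕ) hi
    simp only [hpdef]
    omega
  refine ⟨n, ?_⟩
  set a : ↥(grp e) := Classical.choose (hrep n p ((hPfin n).mem_toFinset.1
    (((hPfin n).mem_toFinset).2 hpmem))) with hadef
  have ha : ∀ i : Fin (K' n), (a : ℕ → ℤ) i = p i :=
    Classical.choose_spec (hrep n p ((hPfin n).mem_toFinset.1
      (((hPfin n).mem_toFinset).2 hpmem)))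
  rw [Set.mem_add]
  refine ⟨a, ?_, g - a, ?_, by abel⟩
  · apply Finset.mem_coe.2
    apply Finset.mem_image.2
    exact ⟨⟨p, ((hPfin n).mem_toFinset).2 hpmem⟩, Finset.mem_attach _ _, rfl⟩
  · apply hKs n
    intro i hi
    have hiK' : i < K' n := lt_of_lt_of_le hi (hK'geK n)
    have h1 : (a : ℕ → ℤ) i = p ⟨i, hiK'⟩ := ha ⟨i, hiK'⟩
    have h2 : ((g - a : ↥(grp e)) : ℕ → ℤ) i = (g : ℕ → ℤ) i - (a : ℕ → ℤ) i := rfl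
    rw [h2, h1]
    simp only [hpdef]
    ring

theorem neg : ¬ MengerBoundedAdd (↥(grp e) × ↥(grp e)) := by
  classical
  intro h
  set U : ℕ → Set (↥(grp e) × ↥(grp e)) := fun n =>
    {z | ∀ i ≤ n, (z.1 : ℕ → ℤ) i = 0 ∧ (z.2 : ℕ → ℤ) i = 0} with hUdef
  have hA : ∀ n, {g : ↥(grp e) | ∀ i ≤ n, (g : ℕ → ℤ) i = 0} ∈ 𝓝 (0 : ↥(grp e)) := by
    intro n
    rw [nhds_subtype]
    refine ⟨{x : ℕ → ℤ | ∀ i < n + 1, x i = 0}, ?_, ?_⟩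
    · rw [ZeroMemClass.coe_zero]
      exact cylinder_mem_nhds (n + 1)
    · intro g hg i hi
      exact hg i (Nat.lt_succ_of_le hi)
  have hU : ∀ n, U n ∈ 𝓝 (0 : ↥(grp e) × ↥(grp e)) := by
    intro n
    have : U n = {g : ↥(grp e) | ∀ i ≤ n, (g : ℕ → ℤ) i = 0} ×ˢ
        {g : ↥(grp e) | ∀ i ≤ n, (g : ℕ → ℤ) i = 0} := by
      ext z
      constructor
      · intro hz
        exact ⟨fun i hi => (hz i hi).1, fun i hi => (hz i hi).2⟩
      · intro hz i hi
        exact ⟨hz.1 i hi, hz.2 i hi⟩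
    rw [this, show (0 : ↥(grp e) × ↥(grp e)) = ((0 : ↥(grp e)), (0 : ↥(grp e))) from rfl,
      nhds_prod_eq]
    exact Filter.prod_mem_prod (hA n) (hA n)
  obtain ⟨F, hF⟩ := h U hU
  set ψ : S := fun n => (F n).sup
    (fun z => max ((z.1 : ℕ → ℤ) n).natAbs ((z.2 : ℕ → ℤ) n).natAbs) with hψdef
  obtain ⟨n, hn⟩ := hF (⟨x1 e ψ, mem_grp_x1 e ψ⟩, ⟨x2 e ψ, mem_grp_x2 e ψ⟩)
  rw [Set.mem_add] at hn
  obtain ⟨w, hw, u, hu, heq⟩ := hn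
  have h1 : (w.1 : ℕ → ℤ) n + (u.1 : ℕ → ℤ) n = x1 e ψ n := by
    have := congrArg (fun z => ((Prod.fst z : ↥(grp e)) : ℕ → ℤ) n) heq
    exact this
  have h2 : (w.2 : ℕ → ℤ) n + (u.2 : ℕ → ℤ) n = x2 e ψ n := by
    have := congrArg (fun z => ((Prod.snd z : ↥(grp e)) : ℕ → ℤ) n) heq
    exact this
  have hu1 : (u.1 : ℕ → ℤ) n = 0 := (hu n (le_refl n)).1
  have hu2 : (u.2 : ℕ → ℤ) n = 0 := (hu n (le_refl n)).2
  rw [hu1, add_zero] at h1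
  rw [hu2, add_zero] at h2
  have hb1 : (x1 e ψ n).natAbs ≤ ψ n := by
    rw [← h1]
    exact le_trans (le_max_left _ _) (Finset.le_sup (f := fun z =>
      max ((z.1 : ℕ → ℤ) n).natAbs ((z.2 : ℕ → ℤ) n).natAbs) hw)
  have hb2 : (x2 e ψ n).natAbs ≤ ψ n := by
    rw [← h2]
    exact le_trans (le_max_right _ _) (Finset.le_sup (f := fun z =>
      max ((z.1 : ℕ → ℤ) n).natAbs ((z.2 : ℕ → ℤ) n).natAbs) hw)
  have := escape e ψ n
  omega

end Topology

end

end Stmt16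

theorem CHdown.{v} (h : (2 : Cardinal.{v}) ^ Cardinal.aleph0 = Cardinal.aleph 1) :
    (2 : Cardinal.{0}) ^ Cardinal.aleph0 = Cardinal.aleph 1 := by
  have h2 : Cardinal.lift.{v} ((2 : Cardinal.{0}) ^ Cardinal.aleph0)
      = Cardinal.lift.{v} ((Cardinal.aleph 1 : Cardinal.{0})) := by
    rw [Cardinal.lift_two_power, Cardinal.lift_aleph0, Cardinal.lift_aleph, Ordinal.lift_one]
    exact h
  exact Cardinal.lift_injective h2

/-- Under CH, there is a Menger-bounded subgroup of the Baer–Specker group `ℤ^ℕ`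
whose square is not Menger-bounded. -/
theorem stmt16 (CH : 2 ^ Cardinal.aleph0 = Cardinal.aleph 1) :
    ∃ G : AddSubgroup (ℕ → ℤ),
      MengerBoundedAdd G ∧ ¬ MengerBoundedAdd (G × G) := by
  have CH0 : (2 : Cardinal.{0}) ^ Cardinal.aleph0 = Cardinal.aleph 1 := CHdown CH
  have hcard : Cardinal.mk (ℕ → ℕ) = Cardinal.mk ((Cardinal.aleph 1).ord.ToType) := by
    rw [Cardinal.mk_toType, Cardinal.card_ord]
    have h1 : Cardinal.mk (ℕ → ℕ) = (Cardinal.mk ℕ) ^ (Cardinal.mk ℕ) := by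
      rw [Cardinal.mk_arrow]
      simp
    rw [h1, Cardinal.mk_nat, Cardinal.power_self_eq le_rfl]
    exact CH0
  obtain ⟨e⟩ := Cardinal.eq.1 hcard
  exact ⟨Stmt16.grp e, Stmt16.pos e, Stmt16.neg e⟩
end
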